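/- For every real number t ∈ [−1,1] and every real α with 0 < α ≤ 1, the expression e^{−αt/2}·t·(2+t) − e^{αt/2}·t·(2−t) is nonnegative. -/

import Mathlib

/-!
The expression is even in `t`, so take `0 ≤ t`. Factoring out `t · e^{-αt/2} ≥ 0` leaves
`(2 - t) e^{αt} ≤ 2 + t`; as `αt ≤ t` this follows from the Padé bound `(2 - x) eˣ ≤ 2 + x`
for `x ≥ 0`, i.e. `x ≤ log ((1 + x/2) / (1 - x/2))`, whose series has `x` as its first term
and only nonnegative terms.
-/

open Real

lemma two_mul_le_log_one_add_sub_log_one_sub {y : ℝ} (hy0 : 0 ≤ y) (hy1 : y < 1) :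
    2 * y ≤ log (1 + y) - log (1 - y) := by
  have hs := hasSum_log_sub_log_of_abs_lt_one (abs_lt.2 ⟨by linarith, hy1⟩)
  simpa using le_hasSum hs 0 fun k _ ↦ by positivity

lemma two_sub_mul_exp_le_two_add {x : ℝ} (hx : 0 ≤ x) : (2 - x) * exp x ≤ 2 + x := by
  rcases le_or_gt 2 x with h2 | h2
  · nlinarith [exp_pos x]
  have hlog := two_mul_le_log_one_add_sub_log_one_sub (y := x / 2) (by positivity) (by linarith)
  rw [← log_div (by linarith) (by linarith), le_log_iff_exp_le (div_pos (by linarith) (by linarith)),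
    le_div_iff₀ (by linarith), mul_div_cancel₀ x two_ne_zero] at hlog
  linarith

noncomputable def ell1Expr (α t : ℝ) : ℝ :=
  exp (-(α * t) / 2) * t * (2 + t) - exp (α * t / 2) * t * (2 - t)

lemma ell1Expr_neg (α t : ℝ) : ell1Expr α (-t) = ell1Expr α t := by
  simp only [ell1Expr, mul_neg, neg_neg]
  ring

lemma ell1Expr_eq (α t : ℝ) :
    ell1Expr α t = t * exp (-(α * t) / 2) * (2 + t - (2 - t) * exp (α * t)) := by
  have hsplit : exp (α * t / 2) = exp (-(α * t) / 2) * exp (α * t) := by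
    rw [← exp_add]; ring_nf
  rw [ell1Expr, hsplit]
  ring

lemma ell1Expr_nonneg_of_nonneg {α t : ℝ} (hα : α ≤ 1) (ht0 : 0 ≤ t) (ht2 : t ≤ 2) :
    0 ≤ ell1Expr α t := by
  have hexp : (2 - t) * exp (α * t) ≤ 2 + t :=
    calc (2 - t) * exp (α * t) ≤ (2 - t) * exp t := by
          gcongr
          nlinarith
      _ ≤ 2 + t := two_sub_mul_exp_le_two_add ht0
  rw [ell1Expr_eq]
  exact mul_nonneg (by positivity) (sub_nonneg.2 hexp)

lemma ell1Expr_nonneg {α t : ℝ} (hα : α ≤ 1) (ht : |t| ≤ 2) : 0 ≤ ell1Expr α t := by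
  obtain ⟨ht_lower, ht_upper⟩ := abs_le.1 ht
  rcases le_total 0 t with h | h
  · exact ell1Expr_nonneg_of_nonneg hα h ht_upper
  · rw [← ell1Expr_neg]
    exact ell1Expr_nonneg_of_nonneg hα (neg_nonneg.2 h) (by linarith)

theorem ell1_expr_nonneg (t α : ℝ) (ht : t ∈ Set.Icc (-1 : ℝ) 1) (hα : α ≤ 1) :
    0 ≤ Real.exp (-(α * t) / 2) * t * (2 + t) - Real.exp (α * t / 2) * t * (2 - t) :=
  ell1Expr_nonneg hα (abs_le.2 ⟨by linarith [ht.1], by linarith [ht.2]⟩)
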